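/- There exist two subgroups H₁ and H₂ of the Whitten group Γ₂, each of order 8 and each disjoint from the set D = {(ε₀, ε₁, ε₂, p) ∈ Γ₂ : ε₀ = −1 and ε₁ = ε₂}, such that every subgroup H of Γ₂ with H ∩ D = ∅ is contained in some conjugate of H₁ or in some conjugate of H₂; i.e., the subgroups avoiding D form, up to conjugacy, the order ideal generated by H₁ and H₂ in the subgroup lattice of Γ₂. -/
import Mathlib


/-- The homomorphism `ω : S_μ → Aut(Z₂^{μ+1})`: a permutation `p` fixes the 0th
coordinate (indexed by `none`) and permutes the remaining `μ` coordinates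
(indexed by `some i`). -/
def whittenHom (μ : ℕ) :
    Equiv.Perm (Fin μ) →* MulAut (Option (Fin μ) → Multiplicative (ZMod 2)) where
  toFun p := MulEquiv.arrowCongr (Equiv.optionCongr p) (MulEquiv.refl _)
  map_one' := by
    ext f x
    cases x <;> rfl
  map_mul' := by
    intro p q
    ext f x
    cases x <;> rfl

/-- The Whitten group `Γ_μ = Z₂^{μ+1} ⋊_ω S_μ`. -/
abbrev WhittenGroup (μ : ℕ) : Type :=
  (Option (Fin μ) → Multiplicative (ZMod 2)) ⋊[whittenHom μ] Equiv.Perm (Fin μ)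

/-- The nontrivial element of `Z₂`, written `-1` in the paper. -/
def neg : Multiplicative (ZMod 2) := Multiplicative.ofAdd 1

/-- The set `D = {(ε₀, ε₁, ε₂, p) ∈ Γ₂ : ε₀ = -1 and ε₁ = ε₂}`. -/
def Dset : Set (WhittenGroup 2) :=
  {g | g.left none = neg ∧ g.left (some 0) = g.left (some 1)}

-- Auxiliary material

lemma perm_prod : ∀ (q : Equiv.Perm (Fin 2)) (a : Fin 2 → Multiplicative (ZMod 2)),
    a (q 0) * a (q 1) = a 0 * a 1 := by decide

lemma zmod2_cases (x : Multiplicative (ZMod 2)) : x = 1 ∨ x = neg := by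
  revert x; decide

lemma zmod2_eq_iff (a b : Multiplicative (ZMod 2)) : a * b = 1 ↔ a = b := by
  revert a b; decide

lemma zmod2_cancel (c d : Multiplicative (ZMod 2)) : c * (c * d) = d := by
  revert c d; decide

/-- ε₀ as a homomorphism. -/
def f0 : WhittenGroup 2 →* Multiplicative (ZMod 2) where
  toFun g := g.left none
  map_one' := rfl
  map_mul' g h := by
    show (g * h).left none = _
    rw [SemidirectProduct.mul_left]
    rfl

/-- ε₀ε₁ε₂ as a homomorphism. -/
def f1 : WhittenGroup 2 →* Multiplicative (ZMod 2) where
  toFun g := g.left none * (g.left (some 0) * g.left (some 1))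
  map_one' := rfl
  map_mul' g h := by
    show (g * h).left none * ((g * h).left (some 0) * (g * h).left (some 1)) = _
    rw [SemidirectProduct.mul_left]
    show (g.left none * h.left none) *
      ((g.left (some 0) * h.left (some ((g.right)⁻¹ 0))) *
       (g.left (some 1) * h.left (some ((g.right)⁻¹ 1)))) = _
    have hp := perm_prod (g.right)⁻¹ (fun i => h.left (some i))
    calc (g.left none * h.left none) *
      ((g.left (some 0) * h.left (some ((g.right)⁻¹ 0))) *
       (g.left (some 1) * h.left (some ((g.right)⁻¹ 1))))
        = (g.left none * (g.left (some 0) * g.left (some 1))) *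
          (h.left none * (h.left (some ((g.right)⁻¹ 0)) * h.left (some ((g.right)⁻¹ 1)))) := by
          ac_rfl
      _ = _ := by rw [hp]

/-- ε₁ε₂ as a homomorphism. -/
def f2 : WhittenGroup 2 →* Multiplicative (ZMod 2) := f0 * f1

lemma f2_apply (x : WhittenGroup 2) : f2 x = x.left (some 0) * x.left (some 1) := by
  show f0 x * f1 x = _
  show x.left none * (x.left none * (x.left (some 0) * x.left (some 1))) = _
  exact zmod2_cancel _ _

lemma mem_D_iff (x : WhittenGroup 2) : x ∈ Dset ↔ f0 x = neg ∧ f2 x = 1 := by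
  rw [f2_apply, zmod2_eq_iff]
  exact Iff.rfl

def sdpEquiv : WhittenGroup 2 ≃
    (Option (Fin 2) → Multiplicative (ZMod 2)) × Equiv.Perm (Fin 2) where
  toFun g := (g.left, g.right)
  invFun x := ⟨x.1, x.2⟩
  left_inv _ := rfl
  right_inv _ := rfl

lemma card_whitten : Nat.card (WhittenGroup 2) = 16 := by
  rw [Nat.card_congr sdpEquiv, Nat.card_prod, Nat.card_eq_fintype_card,
    Nat.card_eq_fintype_card]
  decide

lemma surj_f0 : Function.Surjective f0 := by
  intro x
  exact ⟨SemidirectProduct.inl (fun o => o.elim x (fun _ => 1)), rfl⟩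

lemma surj_f1 : Function.Surjective f1 := by
  intro x
  refine ⟨SemidirectProduct.inl (fun o => o.elim x (fun _ => 1)), ?_⟩
  show x * (1 * 1) = x
  simp

lemma card_ker_eight (f : WhittenGroup 2 →* Multiplicative (ZMod 2))
    (hf : Function.Surjective f) : Nat.card f.ker = 8 := by
  have h1 := Subgroup.card_mul_index f.ker
  rw [Subgroup.index_ker, card_whitten] at h1
  rw [MonoidHom.range_eq_top.mpr hf] at h1
  rw [show Nat.card (⊤ : Subgroup (Multiplicative (ZMod 2))) = 2 by
    rw [Nat.card_congr Subgroup.topEquiv.toEquiv, Nat.card_eq_fintype_card]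
    decide] at h1
  omega

/-- There are two subgroups of Γ₂, each of order 8 and disjoint
from `D`, such that every subgroup disjoint from `D` is contained in a conjugate
of one of them. -/
theorem whittenGroup_two_maximal_subgroups_avoiding_D :
    ∃ H₁ H₂ : Subgroup (WhittenGroup 2),
      Nat.card H₁ = 8 ∧ Nat.card H₂ = 8 ∧
      (∀ g ∈ H₁, g ∉ Dset) ∧ (∀ g ∈ H₂, g ∉ Dset) ∧
      ∀ H : Subgroup (WhittenGroup 2), (∀ g ∈ H, g ∉ Dset) →
        (∃ γ : WhittenGroup 2, H ≤ Subgroup.map (MulAut.conj γ).toMonoidHom H₁) ∨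
        (∃ γ : WhittenGroup 2, H ≤ Subgroup.map (MulAut.conj γ).toMonoidHom H₂) := by
  refine ⟨f0.ker, f1.ker, card_ker_eight f0 surj_f0, card_ker_eight f1 surj_f1, ?_, ?_, ?_⟩
  · -- ker f0 avoids D
    intro g hg hD
    rw [mem_D_iff] at hD
    rw [(show f0 g = 1 from hg)] at hD
    exact absurd hD.1 (by decide)
  · -- ker f1 avoids D
    intro g hg hD
    rw [mem_D_iff] at hD
    have : f2 g = f0 g * f1 g := rfl
    rw [(show f1 g = 1 from hg), mul_one, hD.1] at this
    rw [this] at hD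
    exact absurd hD.2 (by decide)
  · intro H hH
    by_cases hc : ∀ g ∈ H, f0 g = 1
    · exact Or.inl ⟨1, fun g hg => ⟨g, hc g hg, by simp⟩⟩
    · right
      push_neg at hc
      obtain ⟨g, hgH, hg0⟩ := hc
      have hg0' : f0 g = neg := (zmod2_cases _).resolve_left hg0
      have hg2 : f2 g = neg := by
        rcases zmod2_cases (f2 g) with h | h
        · exact absurd ((mem_D_iff g).mpr ⟨hg0', h⟩) (hH g hgH)
        · exact h
      refine ⟨1, fun h hhH => ⟨h, ?_, by simp⟩⟩
      show f1 h = 1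
      by_contra hne
      have hh1 : f1 h = neg := (zmod2_cases _).resolve_left hne
      have hh0 : f0 h = 1 := by
        rcases zmod2_cases (f0 h) with h0 | h0
        · exact h0
        · exfalso
          apply hH h hhH
          rw [mem_D_iff]
          refine ⟨h0, ?_⟩
          show f0 h * f1 h = 1
          rw [h0, hh1]; decide
      -- now consider g * h ∈ H
      apply hH (g * h) (H.mul_mem hgH hhH)
      rw [mem_D_iff, map_mul, map_mul, hg0', hh0, hg2]
      have : f2 h = neg := by
        show f0 h * f1 h = neg
        rw [hh0, hh1]; decide
      rw [this]
      constructor <;> decide
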